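/- arXiv:1502.06896 — 3 statements merged into one kernel-verified Lean document; each statement's English description precedes it below -/
import Mathlib

section
/- Let M be a connected matroid on ground set E with |E| ≥ 6 such that for every 2-separation (A, Aᶜ) of M, one of the restrictions M|A or M|Aᶜ is a circuit of size 3. If (A, Aᶜ) and (B, Bᶜ) are 2-separations with both M|A and M|B circuits of size 3, then either A = B or A ∩ B = ∅. -/
open Set

/-! ### Matroid core -/

namespace Matroid

variable {α : Type*}

/-- A circuit: a minimal dependent set. -/
def Circuit' (M : Matroid α) (C : Set α) : Prop :=
  M.Dep C ∧ ∀ D, D ⊂ C → M.Indep D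

/-- A matroid is connected if its ground set is nonempty and every two distinct
elements lie in a common circuit. -/
def Connected' (M : Matroid α) : Prop :=
  M.E.Nonempty ∧ ∀ e ∈ M.E, ∀ f ∈ M.E, e ≠ f → ∃ C, M.Circuit' C ∧ e ∈ C ∧ f ∈ C

/-- Deletion of a set of elements. -/
def del (M : Matroid α) (D : Set α) : Matroid α := M ↾ (M.E \ D)

/-- Contraction of a set of elements. -/
def con (M : Matroid α) (C : Set α) : Matroid α := (M✶.del C)✶

/-- `N` is a minor of `M`. -/
def IsMinor' (N M : Matroid α) : Prop :=
  ∃ C D : Set α, Disjoint C D ∧ C ⊆ M.E ∧ D ⊆ M.E ∧ N = (M.con C).del D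

def IsStrictMinor' (N M : Matroid α) : Prop := N.IsMinor' M ∧ N ≠ M

/-- The rank (as an extended natural number) of a set in a matroid. -/
noncomputable def eRk' (M : Matroid α) (X : Set α) : ℕ∞ :=
  ⨆ I : {I : Set α // M.Indep I ∧ I ⊆ X}, I.1.encard

/-- A cocircuit is a circuit of the dual matroid. -/
def Cocircuit' (M : Matroid α) (K : Set α) : Prop := M✶.Circuit' K

/-- A loop is a one-element circuit. -/
def IsLoopElem (M : Matroid α) (e : α) : Prop := M.Circuit' {e}

end Matroid

/-! ### Biased graph core -/

universe u v

/-- A multigraph, given by assigning two (possibly equal) endpoints to each edge. -/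
structure MultiGraph (V : Type u) (E : Type v) where
  fst : E → V
  snd : E → V

namespace MultiGraph

variable {V : Type u} {E : Type v} (G : MultiGraph V E)

/-- Vertex `v` is incident with edge `e`. -/
def Inc (v : V) (e : E) : Prop := G.fst e = v ∨ G.snd e = v

/-- `e` is a loop. -/
def IsLoopEdge (e : E) : Prop := G.fst e = G.snd e

/-- `e` is a link (an edge with two distinct endpoints). -/
def IsLink (e : E) : Prop := G.fst e ≠ G.snd e

/-- The set of vertices incident with an edge in `X`. -/
def VSet (X : Set E) : Set V := {v | ∃ e ∈ X, G.Inc v e}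

/-- The degree of `v` in the edge set `X` (loops count twice). -/
noncomputable def deg (X : Set E) (v : V) : ℕ :=
  {e | e ∈ X ∧ G.fst e = v}.ncard + {e | e ∈ X ∧ G.snd e = v}.ncard

/-- Two edges of `X` are adjacent if they share a vertex. -/
def EdgeAdj (X : Set E) (e f : E) : Prop := e ∈ X ∧ f ∈ X ∧ ∃ v, G.Inc v e ∧ G.Inc v f

/-- The subgraph induced by the edge set `X` is connected. -/
def ConnectedOn (X : Set E) : Prop :=
  ∀ ⦃e f⦄, e ∈ X → f ∈ X → Relation.ReflTransGen (G.EdgeAdj X) e f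

/-- An edge set is a cycle if it is finite, nonempty, connected and every
incident vertex has degree exactly two. -/
def IsCycle (C : Set E) : Prop :=
  C.Finite ∧ C.Nonempty ∧ G.ConnectedOn C ∧ ∀ v ∈ G.VSet C, G.deg C v = 2

/-- The ends of an edge set: its vertices of degree one. -/
def Ends (P : Set E) : Set V := {v | v ∈ G.VSet P ∧ G.deg P v = 1}

/-- An edge set is a path if it is finite, nonempty, connected, has maximum degree
two and exactly two vertices of degree one. -/
def IsPath (P : Set E) : Prop :=
  P.Finite ∧ P.Nonempty ∧ G.ConnectedOn P ∧ (∀ v ∈ G.VSet P, G.deg P v ≤ 2) ∧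
    (G.Ends P).ncard = 2

/-- `C` is (the edge set of) a connected component of the subgraph induced by `X`. -/
def IsComponentOf (C X : Set E) : Prop :=
  ∃ e ∈ X, C = {f | f ∈ X ∧ Relation.ReflTransGen (G.EdgeAdj X) e f}

end MultiGraph

/-- A biased graph: a multigraph with a distinguished collection of "balanced" edge sets. -/
structure BiasedGraph (V : Type u) (E : Type v) extends MultiGraph V E where
  Balanced : Set (Set E)

namespace BiasedGraph

variable {V : Type u} {E : Type v} (Ω : BiasedGraph V E)

/-- The theta property: every balanced set is a cycle, and no theta subgraph
(a union of two cycles whose symmetric difference is a cycle) contains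
exactly two balanced cycles. -/
def ThetaProperty : Prop :=
  (∀ C ∈ Ω.Balanced, Ω.toMultiGraph.IsCycle C) ∧
  ∀ C₁ C₂ C₃ : Set E, Ω.toMultiGraph.IsCycle C₁ → Ω.toMultiGraph.IsCycle C₂ →
    Ω.toMultiGraph.IsCycle C₃ → C₃ = symmDiff C₁ C₂ →
    C₁ ∈ Ω.Balanced → C₂ ∈ Ω.Balanced → C₃ ∈ Ω.Balanced

def IsBalancedCycle (C : Set E) : Prop := Ω.toMultiGraph.IsCycle C ∧ C ∈ Ω.Balanced

def IsUnbalancedCycle (C : Set E) : Prop := Ω.toMultiGraph.IsCycle C ∧ C ∉ Ω.Balanced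

/-- The subgraph induced by `X` is balanced: every cycle inside it is balanced. -/
def BalancedOn (X : Set E) : Prop :=
  ∀ C ⊆ X, Ω.toMultiGraph.IsCycle C → C ∈ Ω.Balanced

/-- A contrabalanced theta subgraph: all three of its cycles are unbalanced. -/
def IsContraTheta (T : Set E) : Prop :=
  ∃ C₁ C₂ C₃ : Set E, Ω.IsUnbalancedCycle C₁ ∧ Ω.IsUnbalancedCycle C₂ ∧
    Ω.IsUnbalancedCycle C₃ ∧ C₃ = symmDiff C₁ C₂ ∧ T = C₁ ∪ C₂

/-- Tight handcuffs: two edge-disjoint unbalanced cycles meeting in exactly one vertex. -/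
def IsTightHandcuff (H : Set E) : Prop :=
  ∃ C₁ C₂ : Set E, Ω.IsUnbalancedCycle C₁ ∧ Ω.IsUnbalancedCycle C₂ ∧ Disjoint C₁ C₂ ∧
    (∃ v, Ω.toMultiGraph.VSet C₁ ∩ Ω.toMultiGraph.VSet C₂ = {v}) ∧ H = C₁ ∪ C₂

/-- Loose handcuffs: two vertex-disjoint unbalanced cycles joined by a path meeting
them only in its two ends. -/
def IsLooseHandcuff (H : Set E) : Prop :=
  ∃ C₁ C₂ P : Set E, Ω.IsUnbalancedCycle C₁ ∧ Ω.IsUnbalancedCycle C₂ ∧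
    Disjoint (Ω.toMultiGraph.VSet C₁) (Ω.toMultiGraph.VSet C₂) ∧
    Ω.toMultiGraph.IsPath P ∧ Disjoint P (C₁ ∪ C₂) ∧
    (∃ a b, a ≠ b ∧ Ω.toMultiGraph.Ends P = {a, b} ∧
      Ω.toMultiGraph.VSet P ∩ Ω.toMultiGraph.VSet C₁ = {a} ∧
      Ω.toMultiGraph.VSet P ∩ Ω.toMultiGraph.VSet C₂ = {b}) ∧
    H = C₁ ∪ C₂ ∪ P

/-- The circuits of the frame matroid of a biased graph. -/
def FrameCircuit (X : Set E) : Prop :=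
  Ω.IsBalancedCycle X ∨ Ω.IsContraTheta X ∨ Ω.IsTightHandcuff X ∨ Ω.IsLooseHandcuff X

end BiasedGraph

/-- A biased graph (on the ground set of `M`) represents the matroid `M`:
it satisfies the theta property and the circuits of `M` are exactly its frame circuits. -/
def BiasedGraph.Represents {V : Type u} {α : Type v} (M : Matroid α)
    (Ω : BiasedGraph V ↥M.E) : Prop :=
  Ω.ThetaProperty ∧ ∀ X : Set ↥M.E, M.Circuit' (Subtype.val '' X) ↔ Ω.FrameCircuit X

/-- A matroid is frame if some biased graph represents it. -/
def Matroid.IsFrame {α : Type v} (M : Matroid α) : Prop :=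
  ∃ (V : Type v) (Ω : BiasedGraph V ↥M.E), BiasedGraph.Represents M Ω

/-- A matroidal `(M, L)` is frame if some biased graph representing `M` has all
elements of `L` as unbalanced loops. -/
def Matroid.IsFrameMatroidal {α : Type v} (M : Matroid α) (L : Set α) : Prop :=
  ∃ (V : Type v) (Ω : BiasedGraph V ↥M.E), BiasedGraph.Represents M Ω ∧
    ∀ e : ↥M.E, e.1 ∈ L → Ω.toMultiGraph.IsLoopEdge e ∧ {e} ∉ Ω.Balanced

/-- A 2-separation of a matroid: both sides have at least two elements and
`r(A) + r(E \ A) = r(E) + 1` (i.e. the separation has order 2). -/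
def Matroid.TwoSep {α : Type*} (M : Matroid α) (A : Set α) : Prop :=
  A ⊆ M.E ∧ 2 ≤ A.encard ∧ 2 ≤ (M.E \ A).encard ∧
    M.eRk' A + M.eRk' (M.E \ A) = M.eRk' M.E + 1


/-!
Write `λ(X) = r(X) + r(E \ X) - r(E)`, so that 2-separating sets are those with `λ = 1`.
If two distinct 2-separating triangles `A` and `B` meet, uncrossing produces a 2-separating set
with two elements: `A ∩ B` when `|A ∩ B| = 2`, and `A \ B = A ∩ (E \ B)` when `|A ∩ B| = 1`.
Uncrossing works because `λ` is submodular and, `M` being connected, `λ(A ∪ B) ≥ 1`.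
A 2-separating pair is impossible: neither it nor its complement, of size `|E| - 2 ≥ 4`,
has three elements.
-/

lemma Set.eq_or_inter_eq_empty_or_of_encard_eq_three {α : Type*} {A B : Set α}
    (hA : A.encard = 3) (hB : B.encard = 3) :
    A = B ∨ A ∩ B = ∅ ∨ ((A \ B).encard = 2 ∧ (B \ A).Nonempty) ∨
      ((A ∩ B).encard = 2 ∧ (A ∪ B).encard = 4) := by
  have hA_sdiff := encard_sdiff_add_encard_inter A B
  have hB_sdiff := encard_sdiff_add_encard_inter B A
  have h_union := encard_union_add_encard_inter A B
  have h_le : (A ∩ B).encard ≤ A.encard := encard_mono inter_subset_left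
  rw [hA] at hA_sdiff h_union h_le
  rw [hB, inter_comm] at hB_sdiff
  rw [hB] at h_union
  generalize hk : (A ∩ B).encard = k at hA_sdiff hB_sdiff h_union h_le
  generalize (A \ B).encard = a at hA_sdiff
  generalize hb : (B \ A).encard = b at hB_sdiff
  generalize (A ∪ B).encard = u at h_union
  obtain rfl | rfl | rfl | rfl : k = 0 ∨ k = 1 ∨ k = 2 ∨ k = 3 := by
    clear hk hb
    enat_to_nat
    omega
  · exact Or.inr (Or.inl (encard_eq_zero.1 hk))
  · have hb_ne : b ≠ 0 := by enat_to_nat; omega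
    refine Or.inr (Or.inr (Or.inl ⟨by enat_to_nat; omega, ?_⟩))
    exact nonempty_of_encard_ne_zero (hb ▸ hb_ne)
  · exact Or.inr (Or.inr (Or.inr ⟨rfl, by enat_to_nat; omega⟩))
  · have hfin : (A ∩ B).Finite := finite_of_encard_eq_coe hk
    left
    rw [← hfin.eq_of_subset_of_encard_le inter_subset_left (by rw [hA, hk]),
      hfin.eq_of_subset_of_encard_le inter_subset_right (by rw [hB, hk])]

namespace Matroid

variable {α : Type*} {M : Matroid α} {C X Y : Set α}

lemma eRk'_eq_eRk (M : Matroid α) (X : Set α) : M.eRk' X = M.eRk X := by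
  obtain ⟨I, hI⟩ := M.exists_isBasis' X
  refine le_antisymm (iSup_le fun J ↦ J.2.1.encard_le_eRk_of_subset J.2.2) ?_
  rw [← hI.encard_eq_eRk]
  exact le_iSup (fun J : {J : Set α // M.Indep J ∧ J ⊆ X} ↦ J.1.encard)
    ⟨I, hI.indep, hI.subset⟩

lemma circuit'_iff_isCircuit : M.Circuit' C ↔ M.IsCircuit C := by
  rw [isCircuit_iff_forall_ssubset, Circuit']

lemma twoSep_iff : M.TwoSep X ↔ X ⊆ M.E ∧ 2 ≤ X.encard ∧ 2 ≤ (M.E \ X).encard ∧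
    M.eRk X + M.eRk (M.E \ X) = M.eRk M.E + 1 := by
  simp only [TwoSep, eRk'_eq_eRk]

lemma TwoSep.compl (hX : M.TwoSep X) : M.TwoSep (M.E \ X) := by
  obtain ⟨hXE, hX2, hXc2, hr⟩ := twoSep_iff.1 hX
  rw [twoSep_iff, sdiff_sdiff_cancel_left hXE, add_comm]
  exact ⟨sdiff_subset, hXc2, hX2, hr⟩

lemma IsCircuit.subset_or_disjoint_of_eRk_add_eRk_compl_le [M.RankFinite] (hC : M.IsCircuit C)
    (hXE : X ⊆ M.E) (hX : M.eRk X + M.eRk (M.E \ X) ≤ M.eRk M.E) : C ⊆ X ∨ Disjoint C X := by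
  by_contra! ⟨hCX, hCX'⟩
  obtain ⟨I, hI, hCI⟩ := (hC.ssubset_indep ⟨inter_subset_left, fun h ↦
    hCX (h.trans inter_subset_right)⟩).subset_isBasis'_of_subset (inter_subset_right (s := C))
  obtain ⟨J, hJ, hCJ⟩ := (hC.ssubset_indep (sdiff_ssubset_left_iff.2
    (not_disjoint_iff_nonempty_inter.1 hCX'))).subset_isBasis'_of_subset
    (sdiff_subset_sdiff_left hC.subset_ground)
  have hIJ : M.eRk (I ∪ J) = M.eRk M.E := by
    rw [hI.eRk_eq_eRk_union, union_comm, hJ.eRk_eq_eRk_union, sdiff_union_of_subset hXE]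
  have hIJ_indep : M.Indep (I ∪ J) := by
    refine (M.isRkFinite_set _).indep_of_encard_le_eRk ?_
    calc (I ∪ J).encard ≤ I.encard + J.encard := encard_union_le I J
      _ = M.eRk X + M.eRk (M.E \ X) := by rw [hI.encard_eq_eRk, hJ.encard_eq_eRk]
      _ ≤ M.eRk (I ∪ J) := hIJ ▸ hX
  refine hC.dep.not_indep (hIJ_indep.subset ?_)
  rw [← inter_union_sdiff C X]
  exact union_subset_union hCI hCJ

lemma Connected'.eRk_add_one_le [M.RankFinite] (hM : M.Connected') (hXE : X ⊆ M.E)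
    (hX : X.Nonempty) (hXc : (M.E \ X).Nonempty) :
    M.eRk M.E + 1 ≤ M.eRk X + M.eRk (M.E \ X) := by
  obtain ⟨e, he⟩ := hX
  obtain ⟨f, hfE, hfX⟩ := hXc
  obtain ⟨C, hC, heC, hfC⟩ := hM.2 e (hXE he) f hfE (ne_of_mem_of_not_mem he hfX)
  by_contra! hlt
  rcases (circuit'_iff_isCircuit.1 hC).subset_or_disjoint_of_eRk_add_eRk_compl_le hXE
    (Order.le_of_lt_add_one hlt) with hCX | hCX
  · exact hfX (hCX hfC)
  · exact hCX.notMem_of_mem_left heC he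

lemma eRk_add_eRk_compl_inter_add_union_le (M : Matroid α) (X Y : Set α) :
    M.eRk (X ∩ Y) + M.eRk (M.E \ (X ∩ Y)) + (M.eRk (X ∪ Y) + M.eRk (M.E \ (X ∪ Y))) ≤
      M.eRk X + M.eRk (M.E \ X) + (M.eRk Y + M.eRk (M.E \ Y)) :=
  calc _ = (M.eRk (X ∩ Y) + M.eRk (X ∪ Y)) +
          (M.eRk (M.E \ (X ∪ Y)) + M.eRk (M.E \ (X ∩ Y))) := by ring
    _ ≤ (M.eRk X + M.eRk Y) + (M.eRk (M.E \ X) + M.eRk (M.E \ Y)) :=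
        add_le_add (M.eRk_inter_add_eRk_union_le X Y) (M.eRk_compl_union_add_eRk_compl_inter_le X Y)
    _ = _ := by ring

lemma TwoSep.inter (hM : M.Connected') [M.RankFinite] (hX : M.TwoSep X) (hY : M.TwoSep Y)
    (hXY : 2 ≤ (X ∩ Y).encard) (hXYc : 2 ≤ (M.E \ (X ∩ Y)).encard)
    (hXYu : (M.E \ (X ∪ Y)).Nonempty) : M.TwoSep (X ∩ Y) := by
  obtain ⟨hXE, -, -, hrX⟩ := twoSep_iff.1 hX
  obtain ⟨hYE, -, -, hrY⟩ := twoSep_iff.1 hY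
  have hXY₀ : (X ∩ Y).Nonempty := one_le_encard_iff_nonempty.1 (one_le_two.trans hXY)
  have hXYc₀ : (M.E \ (X ∩ Y)).Nonempty := one_le_encard_iff_nonempty.1 (one_le_two.trans hXYc)
  have h_union := hM.eRk_add_one_le (union_subset hXE hYE)
    (hXY₀.mono (inter_subset_left.trans subset_union_left)) hXYu
  have h_inter := hM.eRk_add_one_le (inter_subset_left.trans hXE) hXY₀ hXYc₀
  refine twoSep_iff.2 ⟨inter_subset_left.trans hXE, hXY, hXYc, le_antisymm ?_ h_inter⟩
  have hfin : M.eRk M.E + 1 ≠ ⊤ := by simpa using (M.isRkFinite_set M.E).eRk_lt_top.ne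
  refine (ENat.add_le_add_iff_right hfin).1 ?_
  calc _ ≤ M.eRk (X ∩ Y) + M.eRk (M.E \ (X ∩ Y)) +
          (M.eRk (X ∪ Y) + M.eRk (M.E \ (X ∪ Y))) := by gcongr
    _ ≤ M.eRk X + M.eRk (M.E \ X) + (M.eRk Y + M.eRk (M.E \ Y)) :=
        M.eRk_add_eRk_compl_inter_add_union_le X Y
    _ = _ := by rw [hrX, hrY]

lemma TwoSep.sdiff (hM : M.Connected') [M.RankFinite] (hX : M.TwoSep X) (hY : M.TwoSep Y)
    (hXY : 2 ≤ (X \ Y).encard) (hXYc : 2 ≤ (M.E \ (X \ Y)).encard) (hYX : (Y \ X).Nonempty) :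
    M.TwoSep (X \ Y) := by
  have hX_inter : X ∩ (M.E \ Y) = X \ Y := by rw [← inter_sdiff_assoc, inter_eq_left.2 hX.1]
  rw [← hX_inter] at hXY hXYc ⊢
  obtain ⟨e, heY, heX⟩ := hYX
  exact hX.inter hM hY.compl hXY hXYc ⟨e, hY.1 heY, by simp [heX, heY]⟩

end Matroid

theorem stmt_11 {α : Type*} (M : Matroid α) [M.Finite] (hconn : M.Connected')
    (hcard : 6 ≤ M.E.encard)
    (h3 : ∀ A : Set α, M.TwoSep A →
      (M.Circuit' A ∧ A.encard = 3) ∨ (M.Circuit' (M.E \ A) ∧ (M.E \ A).encard = 3))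
    (A B : Set α) (hA : M.TwoSep A) (hB : M.TwoSep B)
    (hA3 : M.Circuit' A ∧ A.encard = 3) (hB3 : M.Circuit' B ∧ B.encard = 3) :
    A = B ∨ A ∩ B = ∅ := by
  have hno_pair : ∀ X, M.TwoSep X → X.encard ≠ 2 := by
    intro X hX hX2
    rcases h3 X hX with ⟨-, h⟩ | ⟨-, h⟩
    · rw [hX2] at h
      norm_num at h
    · have hsize := encard_sdiff_add_encard_of_subset hX.1
      rw [h, hX2] at hsize
      rw [← hsize] at hcard
      norm_num at hcard
  have hlarge : ∀ X ⊆ M.E, X.encard ≤ 4 → 2 ≤ (M.E \ X).encard := fun X hX hX4 ↦ by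
    rw [encard_sdiff hX (finite_of_encard_le_coe hX4)]
    exact ENat.le_sub_of_add_le_left (hX4.trans_lt (by decide)).ne
      ((add_le_add_left hX4 2).trans hcard)
  rcases eq_or_inter_eq_empty_or_of_encard_eq_three hA3.2 hB3.2 with
    h | h | ⟨hAB, hBA⟩ | ⟨hAB, hAuB⟩
  · exact Or.inl h
  · exact Or.inr h
  · refine absurd hAB (hno_pair _ (hA.sdiff hconn hB hAB.ge ?_ hBA))
    exact hlarge _ (sdiff_subset.trans hA.1) (hAB.trans_le (by decide))
  · have hout := hlarge _ (union_subset hA.1 hB.1) hAuB.le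
    refine absurd hAB (hno_pair _ (hA.inter hconn hB hAB.ge ?_
      (one_le_encard_iff_nonempty.1 (one_le_two.trans hout))))
    exact hlarge _ (inter_subset_left.trans hA.1) (hAB.trans_le (by decide))
end

section
/- There is no biased graph representation of the three-element circuit U_{2,3} in which all three elements are unbalanced loops; consequently the matroidal (U_{2,3}, E(U_{2,3})) is not frame. -/
open Set

/-! ### Biased graph core -/

universe u v

/-!
When every edge is a loop, two edges are adjacent only if they sit at the same vertex and every
vertex has even degree. Hence every cycle is a single edge and there are no paths, so every frame
circuit — a balanced cycle, a contrabalanced theta or a pair of handcuffs — has at most two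
elements, whereas the circuit of `U_{2,3}` has three.
-/

namespace MultiGraph

variable {V E : Type*} {G : MultiGraph V E}

lemma EdgeAdj.fst_eq (hloop : ∀ e, G.IsLoopEdge e) {X : Set E} {e f : E}
    (h : G.EdgeAdj X e f) : G.fst e = G.fst f := by
  obtain ⟨-, -, v, he, hf⟩ := h
  have key : ∀ g, G.Inc v g → G.fst g = v := fun g hg => hg.elim id fun h => (hloop g).trans h
  rw [key e he, key f hf]

lemma ConnectedOn.fst_eq (hloop : ∀ e, G.IsLoopEdge e) {X : Set E} (hX : G.ConnectedOn X)
    {e f : E} (he : e ∈ X) (hf : f ∈ X) : G.fst e = G.fst f := by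
  induction hX he hf with
  | refl => rfl
  | tail _ hadj ih => exact (ih hadj.1).trans (hadj.fst_eq hloop)

lemma deg_eq_two_mul_of_forall_isLoopEdge (hloop : ∀ e, G.IsLoopEdge e) (X : Set E) (v : V) :
    G.deg X v = 2 * {e | e ∈ X ∧ G.fst e = v}.ncard := by
  have hsnd : {e | e ∈ X ∧ G.snd e = v} = {e | e ∈ X ∧ G.fst e = v} := by
    ext e
    exact and_congr_right fun _ => by rw [show G.fst e = G.snd e from hloop e]
  rw [deg, hsnd, two_mul]

lemma IsCycle.exists_eq_singleton (hloop : ∀ e, G.IsLoopEdge e) {C : Set E} (hC : G.IsCycle C) :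
    ∃ e, C = {e} := by
  obtain ⟨-, ⟨e, he⟩, hconn, hdeg⟩ := hC
  have hC_at : {f | f ∈ C ∧ G.fst f = G.fst e} = C :=
    sep_eq_self_iff_mem_true.mpr fun f hf => hconn.fst_eq hloop hf he
  have h := hdeg (G.fst e) ⟨e, he, Or.inl rfl⟩
  rw [deg_eq_two_mul_of_forall_isLoopEdge hloop, hC_at] at h
  exact ncard_eq_one.mp (by omega)

lemma not_isPath (hloop : ∀ e, G.IsLoopEdge e) (P : Set E) : ¬ G.IsPath P := by
  rintro ⟨-, -, -, -, hends⟩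
  obtain ⟨v, -, hv⟩ := nonempty_of_ncard_ne_zero (s := G.Ends P) (by omega)
  rw [deg_eq_two_mul_of_forall_isLoopEdge hloop] at hv
  omega

end MultiGraph

namespace BiasedGraph

variable {V E : Type*} {Ω : BiasedGraph V E}

lemma IsUnbalancedCycle.encard_eq_one (hloop : ∀ e, Ω.IsLoopEdge e) {C : Set E}
    (hC : Ω.IsUnbalancedCycle C) : C.encard = 1 := by
  obtain ⟨e, rfl⟩ := hC.1.exists_eq_singleton hloop
  exact encard_singleton e

lemma encard_union_le_two_of_isUnbalancedCycle (hloop : ∀ e, Ω.IsLoopEdge e) {C₁ C₂ : Set E}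
    (h₁ : Ω.IsUnbalancedCycle C₁) (h₂ : Ω.IsUnbalancedCycle C₂) : (C₁ ∪ C₂).encard ≤ 2 := by
  calc (C₁ ∪ C₂).encard ≤ C₁.encard + C₂.encard := encard_union_le C₁ C₂
    _ = 2 := by rw [h₁.encard_eq_one hloop, h₂.encard_eq_one hloop]; rfl

lemma FrameCircuit.encard_le_two (hloop : ∀ e, Ω.IsLoopEdge e) {X : Set E}
    (hX : Ω.FrameCircuit X) : X.encard ≤ 2 := by
  rcases hX with ⟨hcyc, -⟩ | ⟨C₁, C₂, -, h₁, h₂, -, -, rfl⟩ | ⟨C₁, C₂, h₁, h₂, -, -, rfl⟩ |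
      ⟨-, -, P, -, -, -, hP, -⟩
  · obtain ⟨e, rfl⟩ := hcyc.exists_eq_singleton hloop
    rw [encard_singleton]
    norm_num
  · exact encard_union_le_two_of_isUnbalancedCycle hloop h₁ h₂
  · exact encard_union_le_two_of_isUnbalancedCycle hloop h₁ h₂
  · exact (MultiGraph.not_isPath hloop P hP).elim

end BiasedGraph

theorem stmt_14 (M : Matroid (Fin 3)) (hE : M.E = Set.univ)
    (hC : M.Circuit' Set.univ) :
    ¬ M.IsFrameMatroidal Set.univ := by
  rintro ⟨V, Ω, ⟨-, hcirc⟩, hloops⟩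
  have himage : Subtype.val '' (univ : Set M.E) = univ := by
    rw [image_univ, Subtype.range_coe, hE]
  have hframe : Ω.FrameCircuit univ := (hcirc univ).1 (himage ▸ hC)
  have hcard : (univ : Set M.E).encard = 3 := by
    rw [← Subtype.val_injective.encard_image, himage, encard_univ]
    simp
  have hle := hframe.encard_le_two fun e => (hloops e trivial).1
  rw [hcard] at hle
  norm_num at hle
end

section
/- The cycle matroid M(W₄) of the 4-spoke wheel, with L the set consisting of two nonadjacent rim edges e₁, e₂ (each having both endpoints of degree 3), is not a frame matroidal: there is no biased graph Ω with F(Ω) ≅ M(W₄) in which both e₁ and e₂ are unbalanced loops. -/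
open Set

/-! ### Biased graph core -/

universe u v

/-- The 4-spoke wheel as a multigraph: vertex `4` is the hub, edges `0,1,2,3` are the
rim edges (edge `i` joins `i` and `i+1 mod 4`), edges `4,...,7` are the spokes. -/
def W4 : MultiGraph (Fin 5) (Fin 8) where
  fst := ![0, 1, 2, 3, 0, 1, 2, 3]
  snd := ![1, 2, 3, 0, 4, 4, 4, 4]

/-- `W₄` with all cycles balanced; its frame matroid is the cycle matroid `M(W₄)`. -/
def W4Biased : BiasedGraph (Fin 5) (Fin 8) := ⟨W4, {C | W4.IsCycle C}⟩


/-! Let the unbalanced loops `0` and `2` of `Ω` sit at the vertices `u` and `w`. A circuit of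
`M(W₄)` that contains both loops and some further element can only be a loose handcuff of `Ω`,
so its other elements form a `u`–`w` path. The rim `{0, 1, 2, 3}` and the two pentagons
`{0, 1, 2, 7, 4}` and `{0, 2, 3, 5, 6}` thus give `u`–`w` paths `{1, 3}`, `{1, 4, 7}` and
`{3, 5, 6}` in `Ω`. Walking from the middle vertex of `{1, 3}` along the other two paths, the spokes
`4, 5, 6, 7` contain a `u`–`w` path `P`. Then `{0, 2} ∪ P` is a loose handcuff, hence a circuit of
`M(W₄)`, but no cycle of `W₄` consists of `0`, `2` and spokes. -/

namespace MultiGraph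

variable {V : Type u} {E : Type v} {G : MultiGraph V E} {X Y P C C₁ C₂ : Set E} {e f g : E}
  {a b c u w x v : V}

def Joins (G : MultiGraph V E) (e : E) (a b : V) : Prop :=
  (G.fst e = a ∧ G.snd e = b) ∨ (G.fst e = b ∧ G.snd e = a)

def IsPathBetween (G : MultiGraph V E) (P : Set E) (a b : V) : Prop :=
  G.IsPath P ∧ G.Ends P = {a, b}

lemma Joins.symm (h : G.Joins e a b) : G.Joins e b a := Or.symm h

lemma Joins.inc_left (h : G.Joins e a b) : G.Inc a e := h.imp And.left And.right

lemma Joins.inc_right (h : G.Joins e a b) : G.Inc b e := h.symm.inc_left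

lemma IsLoopEdge.joins (h : G.IsLoopEdge e) : G.Joins e (G.fst e) (G.fst e) :=
  Or.inl ⟨rfl, h.symm⟩

lemma exists_joins_of_inc (hl : ¬ G.IsLoopEdge e) (h : G.Inc v e) : ∃ y, y ≠ v ∧ G.Joins e v y := by
  unfold Inc at h
  unfold IsLoopEdge at hl
  rcases h with rfl | rfl
  · exact ⟨G.snd e, Ne.symm hl, .inl ⟨rfl, rfl⟩⟩
  · exact ⟨G.fst e, hl, .inr ⟨rfl, rfl⟩⟩

lemma vset_union : G.VSet (X ∪ Y) = G.VSet X ∪ G.VSet Y := by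
  ext v
  simp only [VSet, mem_union, mem_ofPred_eq, or_and_right, exists_or]

lemma vset_singleton_of_joins (h : G.Joins e a b) : G.VSet {e} = {a, b} := by
  ext v
  simp only [VSet, mem_singleton_iff, exists_eq_left, mem_ofPred_eq, mem_insert_iff]
  unfold Inc
  unfold Joins at h
  grind

lemma vset_insert_of_joins (he : G.Joins e a b) : G.VSet (insert e X) = {a, b} ∪ G.VSet X := by
  rw [insert_eq, vset_union, vset_singleton_of_joins he]

lemma deg_union (hX : X.Finite) (hY : Y.Finite) (h : Disjoint X Y) (v : V) :
    G.deg (X ∪ Y) v = G.deg X v + G.deg Y v := by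
  have split : ∀ p : E → Prop,
      {e | e ∈ X ∪ Y ∧ p e}.ncard = {e | e ∈ X ∧ p e}.ncard + {e | e ∈ Y ∧ p e}.ncard := by
    intro p
    rw [← ncard_union_eq (h.mono (fun _ he => he.1) (fun _ he => he.1))
      (hX.subset fun _ he => he.1) (hY.subset fun _ he => he.1)]
    congr 1
    ext e
    simp only [mem_union, mem_ofPred_eq, or_and_right]
  unfold deg
  rw [split, split]
  ring

lemma deg_insert (he : e ∉ X) (hX : X.Finite) (v : V) :
    G.deg (insert e X) v = G.deg {e} v + G.deg X v := by
  rw [← singleton_union]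
  exact deg_union (finite_singleton e) hX (disjoint_singleton_left.2 he) v

open Classical in
lemma deg_singleton (e : E) (v : V) :
    G.deg {e} v = (if G.fst e = v then 1 else 0) + (if G.snd e = v then 1 else 0) := by
  have count : ∀ p : E → Prop, {x | x ∈ ({e} : Set E) ∧ p x}.ncard = if p e then 1 else 0 := by
    intro p
    split_ifs with hp
    · rw [← ncard_singleton e]
      congr 1
      ext x
      simp only [mem_singleton_iff, mem_ofPred_eq, and_iff_left_iff_imp]
      rintro rfl
      exact hp
    · rw [ncard_eq_zero]
      ext x
      simp only [mem_singleton_iff, mem_ofPred_eq, mem_empty_iff_false, iff_false, not_and]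
      rintro rfl
      exact hp
  exact congrArg₂ (· + ·) (count _) (count _)

open Classical in
lemma deg_singleton_of_joins (h : G.Joins e a b) (v : V) :
    G.deg {e} v = (if a = v then 1 else 0) + (if b = v then 1 else 0) := by
  rw [deg_singleton]
  rcases h with ⟨rfl, rfl⟩ | ⟨rfl, rfl⟩
  · rfl
  · exact add_comm _ _

lemma deg_triple (hef : e ≠ f) (heg : e ≠ g) (hfg : f ≠ g) (v : V) :
    G.deg {e, f, g} v = G.deg {e} v + G.deg {f} v + G.deg {g} v := by
  rw [deg_insert (by simp [hef, heg]) (toFinite _),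
    deg_insert (by simpa using hfg) (finite_singleton g), add_assoc]

lemma deg_eq_zero_iff (hX : X.Finite) : G.deg X v = 0 ↔ v ∉ G.VSet X := by
  have hfin : ∀ p : E → Prop, {e | e ∈ X ∧ p e}.Finite := fun p => hX.subset fun _ he => he.1
  simp only [deg, Nat.add_eq_zero_iff, ncard_eq_zero (hs := hfin _), VSet, Inc,
    mem_ofPred_eq, not_exists, not_and, not_or, eq_empty_iff_forall_notMem]
  grind

lemma mem_ends_iff (hP : P.Finite) : v ∈ G.Ends P ↔ G.deg P v = 1 := by
  refine ⟨And.right, fun h => ⟨?_, h⟩⟩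
  by_contra hv
  rw [← deg_eq_zero_iff hP] at hv
  omega

lemma IsPath.deg_le_two (hP : G.IsPath P) (v : V) : G.deg P v ≤ 2 := by
  by_cases hv : v ∈ G.VSet P
  · exact hP.2.2.2.1 v hv
  · rw [(deg_eq_zero_iff hP.1).2 hv]
    omega

lemma IsCycle.deg_eq_zero_or_two {C : Set E} (hC : G.IsCycle C) (v : V) :
    G.deg C v = 0 ∨ G.deg C v = 2 := by
  by_cases hv : v ∈ G.VSet C
  · exact .inr (hC.2.2.2 v hv)
  · exact .inl ((deg_eq_zero_iff hC.1).2 hv)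

instance : Std.Symm (G.EdgeAdj X) := ⟨fun _ _ ⟨he, hf, v, h₁, h₂⟩ => ⟨hf, he, v, h₂, h₁⟩⟩

lemma connectedOn_of_reflTransGen (h : ∀ f ∈ X, Relation.ReflTransGen (G.EdgeAdj X) e f) :
    G.ConnectedOn X := fun f g hf hg =>
  (Std.Symm.symm _ _ (h f hf)).trans (h g hg)

lemma connectedOn_of_isChain (l : List E) (hl : (e :: l).IsChain (G.EdgeAdj X))
    (hX : ∀ f ∈ X, f ∈ e :: l) : G.ConnectedOn X :=
  connectedOn_of_reflTransGen fun f hf =>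
    hl.induction _ _ (fun _ _ h₁ h₂ => h₂.tail h₁) (fun _ => .refl) f (hX f hf)

lemma ConnectedOn.insert_of_inc (hX : G.ConnectedOn X) (hf : f ∈ X) (hv : G.Inc v e)
    (hvf : G.Inc v f) : G.ConnectedOn (insert e X) := by
  have mono : G.EdgeAdj X ≤ G.EdgeAdj (insert e X) := fun _ _ ⟨h₁, h₂, hv⟩ =>
    ⟨.inr h₁, .inr h₂, hv⟩
  refine connectedOn_of_reflTransGen (e := f) fun g hg => ?_
  rcases hg with rfl | hg
  · exact .single ⟨.inr hf, .inl rfl, v, hvf, hv⟩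
  · exact Relation.ReflTransGen.mono mono _ _ (hX hf hg)

lemma eq_singleton_of_isLoopEdge (hX : X.Finite) (hconn : G.ConnectedOn X)
    (hdeg : G.deg X (G.fst e) ≤ 2) (he : e ∈ X) (hl : G.IsLoopEdge e) : X = {e} := by
  have hrest : G.deg (X \ {e}) (G.fst e) = 0 := by
    have := deg_insert (G := G) (fun h => h.2 rfl) (hX.subset (sdiff_subset (t := {e}))) (G.fst e)
    rw [insert_sdiff_singleton, insert_eq_of_mem he, deg_singleton_of_joins hl.joins] at this
    simp only [if_true] at this
    omega
  have only_e : ∀ f ∈ X, G.Inc (G.fst e) f → f = e := by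
    intro f hf hinc
    by_contra hfe
    exact (deg_eq_zero_iff (hX.subset sdiff_subset)).1 hrest ⟨f, ⟨hf, hfe⟩, hinc⟩
  refine eq_singleton_iff_unique_mem.2 ⟨he, fun f hf => ?_⟩
  induction hconn he hf with
  | refl => rfl
  | tail _ hgf ih =>
    obtain ⟨hg, hf, v, hvg, hvf⟩ := hgf
    rw [ih hg] at hvg
    have hv : v = G.fst e := by unfold Inc IsLoopEdge at *; grind
    exact only_e _ hf (hv ▸ hvf)

lemma IsCycle.eq_singleton_of_isLoopEdge (hC : G.IsCycle C) (he : e ∈ C)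
    (hl : G.IsLoopEdge e) : C = {e} :=
  MultiGraph.eq_singleton_of_isLoopEdge hC.1 hC.2.2.1
    (hC.2.2.2 _ ⟨e, he, .inl rfl⟩).le he hl

lemma IsPath.not_isLoopEdge (hP : G.IsPath P) (he : e ∈ P) : ¬ G.IsLoopEdge e := by
  intro hl
  have hPe := eq_singleton_of_isLoopEdge hP.1 hP.2.2.1 (hP.deg_le_two _) he hl
  have : G.Ends P = ∅ := by
    ext v
    rw [mem_ends_iff hP.1, hPe, deg_singleton_of_joins hl.joins]
    simp only [mem_empty_iff_false, iff_false]
    split_ifs <;> omega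
  have h2 := hP.2.2.2.2
  rw [this, ncard_empty] at h2
  omega

lemma isCycle_singleton_of_isLoopEdge (hl : G.IsLoopEdge e) : G.IsCycle {e} := by
  refine ⟨finite_singleton e, singleton_nonempty e, ?_, fun v hv => ?_⟩
  · rintro f g rfl rfl
    exact .refl
  · rw [vset_singleton_of_joins hl.joins, pair_eq_singleton, mem_singleton_iff] at hv
    rw [deg_singleton_of_joins hl.joins, if_pos hv.symm]

lemma not_isLoopEdge_of_mem_theta (h₁ : G.IsCycle C₁) (h₂ : G.IsCycle C₂)
    (h₃ : G.IsCycle (symmDiff C₁ C₂)) (he : e ∈ C₁ ∪ C₂) : ¬ G.IsLoopEdge e := by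
  wlog he₁ : e ∈ C₁ generalizing C₁ C₂
  · exact this h₂ h₁ (symmDiff_comm C₁ C₂ ▸ h₃) (union_comm C₁ C₂ ▸ he)
      (he.resolve_left he₁)
  intro hl
  have hC₁ := h₁.eq_singleton_of_isLoopEdge he₁ hl
  by_cases he₂ : e ∈ C₂
  · have hC₂ := h₂.eq_singleton_of_isLoopEdge he₂ hl
    simpa [hC₁, hC₂] using h₃.2.1
  · have hΔ := h₃.eq_singleton_of_isLoopEdge (by simp [mem_symmDiff, hC₁, he₂]) hl
    have : C₂ = ∅ := by
      rw [← symmDiff_symmDiff_cancel_left C₁ C₂, hΔ, hC₁, symmDiff_self]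
      rfl
    simpa [this] using h₂.2.1

lemma union_eq_of_isLoopEdge {c₁ c₂ : E} (hC₁ : G.IsCycle C₁) (hC₂ : G.IsCycle C₂)
    (hne : c₁ ≠ c₂) (h₁ : G.IsLoopEdge c₁) (h₂ : G.IsLoopEdge c₂) (hc₁ : c₁ ∈ C₁ ∪ C₂)
    (hc₂ : c₂ ∈ C₁ ∪ C₂) : C₁ ∪ C₂ = {c₁} ∪ {c₂} := by
  wlog hc₁C₁ : c₁ ∈ C₁ generalizing C₁ C₂
  · rw [union_comm] at hc₁ hc₂ ⊢
    exact this hC₂ hC₁ hc₁ hc₂ (hc₁.resolve_right hc₁C₁)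
  have hC₁e := hC₁.eq_singleton_of_isLoopEdge hc₁C₁ h₁
  have hc₂C₂ : c₂ ∈ C₂ := hc₂.resolve_left (by simpa [hC₁e] using hne.symm)
  rw [hC₁e, hC₂.eq_singleton_of_isLoopEdge hc₂C₂ h₂]

lemma IsPathBetween.symm (hP : G.IsPathBetween P a b) : G.IsPathBetween P b a :=
  ⟨hP.1, hP.2.trans (pair_comm a b)⟩

lemma IsPathBetween.deg_eq_one_iff (hP : G.IsPathBetween P a b) :
    G.deg P v = 1 ↔ v = a ∨ v = b := by
  rw [← mem_ends_iff hP.1.1, hP.2, mem_insert_iff, mem_singleton_iff]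

lemma IsPathBetween.ne (hP : G.IsPathBetween P a b) : a ≠ b := by
  rintro rfl
  have h := hP.1.2.2.2.2
  rw [hP.2, pair_eq_singleton, ncard_singleton] at h
  omega

lemma isPathBetween_of_deg (hP : P.Finite) (hne : P.Nonempty) (hconn : G.ConnectedOn P)
    (hle : ∀ v, G.deg P v ≤ 2) (hone : ∀ v, G.deg P v = 1 ↔ v = a ∨ v = b) (hab : a ≠ b) :
    G.IsPathBetween P a b := by
  have hends : G.Ends P = {a, b} := by
    ext v
    rw [mem_ends_iff hP, hone, mem_insert_iff, mem_singleton_iff]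
  exact ⟨⟨hP, hne, hconn, fun v _ => hle v, by rw [hends, ncard_pair hab]⟩, hends⟩

lemma isPathBetween_singleton (he : G.Joins e a b) (hab : a ≠ b) : G.IsPathBetween {e} a b := by
  refine isPathBetween_of_deg (finite_singleton e) (singleton_nonempty e) ?_ (fun v => ?_)
    (fun v => ?_) hab
  · rintro f g rfl rfl
    exact .refl
  all_goals rw [deg_singleton_of_joins he]; grind

lemma IsPathBetween.insert_of_joins (hP : G.IsPathBetween P a b) (he : G.Joins e b c)
    (hc : c ∉ G.VSet P) : G.IsPathBetween (insert e P) a c := by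
  have heP : e ∉ P := fun h => hc ⟨e, h, he.inc_right⟩
  have hdeg : ∀ v, G.deg P v = 1 ↔ v = a ∨ v = b := fun v => hP.deg_eq_one_iff
  have hc0 : G.deg P c = 0 := (deg_eq_zero_iff hP.1.1).2 hc
  obtain ⟨f, hf, hbf⟩ : b ∈ G.VSet P := ((mem_ends_iff hP.1.1).2 ((hdeg b).2 (.inr rfl))).1
  have hbc : b ≠ c := fun h => hc (h ▸ ⟨f, hf, hbf⟩)
  have hac : a ≠ c := by
    rintro rfl
    have := (hdeg a).2 (.inl rfl)
    omega
  have hab := hP.ne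
  refine isPathBetween_of_deg (hP.1.1.insert e) (insert_nonempty e P)
    (hP.1.2.2.1.insert_of_inc hf he.inc_left hbf) (fun v => ?_) (fun v => ?_) hac
  all_goals
    rw [deg_insert heP hP.1.1, deg_singleton_of_joins he]
    have := hP.1.deg_le_two v
    have := hdeg v
    grind

lemma IsPathBetween.exists_joins_of_pair (hef : e ≠ f) (hP : G.IsPathBetween {e, f} a b) :
    ∃ x, x ≠ a ∧ x ≠ b ∧ ((G.Joins e a x ∧ G.Joins f x b) ∨ (G.Joins f a x ∧ G.Joins e x b)) := by
  have he := hP.1.not_isLoopEdge (mem_insert e {f})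
  have hf := hP.1.not_isLoopEdge (mem_insert_of_mem e rfl)
  have hab := hP.ne
  have facts : ∀ v, G.deg {e, f} v = G.deg {e} v + G.deg {f} v ∧ G.deg {e, f} v ≤ 2 ∧
      (G.deg {e, f} v = 1 ↔ v = a ∨ v = b) := fun v =>
    ⟨deg_insert (by simpa using hef) (finite_singleton f) v, hP.1.deg_le_two v,
      hP.deg_eq_one_iff⟩
  have := facts a; have := facts b
  have := facts (G.fst e); have := facts (G.snd e); have := facts (G.fst f); have := facts (G.snd f)
  simp only [deg_singleton] at *
  unfold Joins
  unfold IsLoopEdge at he hf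
  -- pure degree counting: the ends have degree 1, every other vertex degree 0 or 2
  by_cases h₁ : G.fst e = a
  · exact ⟨G.snd e, by grind⟩
  by_cases h₂ : G.snd e = a
  · exact ⟨G.fst e, by grind⟩
  by_cases h₃ : G.fst f = a
  · exact ⟨G.snd f, by grind⟩
  · exact ⟨G.fst f, by grind⟩

lemma IsPathBetween.exists_joins_of_triple (hef : e ≠ f) (heg : e ≠ g) (hfg : f ≠ g)
    (hP : G.IsPathBetween {e, f, g} a b) (he : G.Joins e a x) (hxb : x ≠ b) :
    ∃ y, y ≠ a ∧ y ≠ b ∧ y ≠ x ∧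
      ((G.Joins f x y ∧ G.Joins g y b) ∨ (G.Joins g x y ∧ G.Joins f y b)) := by
  wlog hxf : G.Inc x f generalizing f g
  · have hxg : G.Inc x g := by
      have := hP.1.deg_le_two x
      have := hP.deg_eq_one_iff (v := x)
      simp only [deg_triple hef heg hfg, deg_singleton_of_joins he, deg_singleton] at *
      unfold Inc at hxf ⊢
      grind
    obtain ⟨y, hya, hyb, hyx, h⟩ :=
      this heg hef hfg.symm (by rwa [pair_comm g f]) hxg
    exact ⟨y, hya, hyb, hyx, h.symm⟩
  have hab := hP.ne
  have hle := hP.1.not_isLoopEdge (mem_insert e {f, g})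
  have hlg := hP.1.not_isLoopEdge (mem_insert_of_mem e (mem_insert_of_mem f rfl))
  obtain ⟨y, hyx, hfxy⟩ := exists_joins_of_inc (hP.1.not_isLoopEdge
    (mem_insert_of_mem e (mem_insert f {g}))) hxf
  have facts : ∀ v, G.deg {e, f, g} v ≤ 2 ∧ (G.deg {e, f, g} v = 1 ↔ v = a ∨ v = b) :=
    fun v => ⟨hP.1.deg_le_two v, hP.deg_eq_one_iff⟩
  have := facts a; have := facts b; have := facts x; have := facts y
  have := facts (G.fst g); have := facts (G.snd g)
  simp only [deg_triple hef heg hfg, deg_singleton_of_joins he, deg_singleton_of_joins hfxy,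
    deg_singleton] at *
  unfold Joins at *
  unfold IsLoopEdge at hle hlg
  exact ⟨y, by grind⟩

lemma exists_isPathBetween_of_walk {t₁ t₂ t₃ t₄ : E} {y z : V}
    (h₁ : G.Joins t₁ x y) (h₂ : G.Joins t₂ y w) (h₃ : G.Joins t₃ x z) (h₄ : G.Joins t₄ z u)
    (huw : u ≠ w) (hxu : x ≠ u) (hxw : x ≠ w) (hyu : y ≠ u) (hyw : y ≠ w) (hyx : y ≠ x)
    (hzu : z ≠ u) (hzw : z ≠ w) (hzx : z ≠ x) :
    ∃ P ⊆ ({t₁, t₂, t₃, t₄} : Set E), G.IsPathBetween P u w := by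
  have hu := isPathBetween_singleton h₄.symm hzu.symm
  by_cases hyz : y = z
  · subst hyz
    refine ⟨{t₂, t₄}, by simp [insert_subset_iff], hu.insert_of_joins h₂ ?_⟩
    simp [vset_singleton_of_joins h₄, hyw.symm, huw.symm]
  · refine ⟨{t₂, t₁, t₃, t₄}, by simp [insert_subset_iff], ?_⟩
    refine ((hu.insert_of_joins h₃.symm ?_).insert_of_joins h₁ ?_).insert_of_joins h₂ ?_ <;>
      simp only [vset_insert_of_joins h₁, vset_insert_of_joins h₃.symm,
        vset_singleton_of_joins h₄.symm, mem_union, mem_insert_iff, mem_singleton_iff] <;>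
      grind

lemma exists_isPathBetween_of_three_paths {r₁ r₂ s₁ s₂ s₃ s₄ : E} (hr : r₁ ≠ r₂)
    (hr₁s₁ : r₁ ≠ s₁) (hr₁s₂ : r₁ ≠ s₂) (hs₁₂ : s₁ ≠ s₂)
    (hr₂s₃ : r₂ ≠ s₃) (hr₂s₄ : r₂ ≠ s₄) (hs₃₄ : s₃ ≠ s₄)
    (h₀ : G.IsPathBetween {r₁, r₂} u w) (h₁ : G.IsPathBetween {r₁, s₁, s₂} u w)
    (h₂ : G.IsPathBetween {r₂, s₃, s₄} u w) :
    ∃ P ⊆ ({s₁, s₂, s₃, s₄} : Set E), G.IsPathBetween P u w := by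
  obtain ⟨x, hxu, hxw, hx⟩ := h₀.exists_joins_of_pair hr
  wlog hx₁ : G.Joins r₁ u x ∧ G.Joins r₂ x w generalizing u w
  · have hx₂ := hx.resolve_left hx₁
    obtain ⟨P, hPs, hP⟩ := this h₀.symm h₁.symm h₂.symm hxw hxu
      (.inl ⟨hx₂.2.symm, hx₂.1.symm⟩) ⟨hx₂.2.symm, hx₂.1.symm⟩
    exact ⟨P, hPs, hP.symm⟩
  have huw := h₀.ne
  obtain ⟨y, hyu, hyw, hyx, hy⟩ := h₁.exists_joins_of_triple hr₁s₁ hr₁s₂ hs₁₂ hx₁.1 hxw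
  obtain ⟨z, hzw, hzu, hzx, hz⟩ := h₂.symm.exists_joins_of_triple hr₂s₃ hr₂s₄ hs₃₄ hx₁.2.symm hxu
  rcases hy with ⟨hy₁, hy₂⟩ | ⟨hy₁, hy₂⟩ <;> rcases hz with ⟨hz₁, hz₂⟩ | ⟨hz₁, hz₂⟩
  · exact exists_isPathBetween_of_walk hy₁ hy₂ hz₁ hz₂ huw hxu hxw hyu hyw hyx hzu hzw hzx
  · rw [pair_comm s₃ s₄]
    exact exists_isPathBetween_of_walk hy₁ hy₂ hz₁ hz₂ huw hxu hxw hyu hyw hyx hzu hzw hzx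
  · rw [insert_comm s₁ s₂]
    exact exists_isPathBetween_of_walk hy₁ hy₂ hz₁ hz₂ huw hxu hxw hyu hyw hyx hzu hzw hzx
  · rw [insert_comm s₁ s₂, pair_comm s₃ s₄]
    exact exists_isPathBetween_of_walk hy₁ hy₂ hz₁ hz₂ huw hxu hxw hyu hyw hyx hzu hzw hzx

instance [DecidableEq V] (v : V) (e : E) : Decidable (G.Inc v e) :=
  inferInstanceAs (Decidable (_ ∨ _))

instance [DecidableEq V] [Fintype V] [DecidableEq E] (S : Finset E) :
    DecidableRel (G.EdgeAdj ↑S) := fun e f =>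
  decidable_of_iff (e ∈ S ∧ f ∈ S ∧ ∃ v, G.Inc v e ∧ G.Inc v f) (by simp [EdgeAdj])

lemma deg_coe_finset [DecidableEq V] (S : Finset E) (v : V) :
    G.deg ↑S v = {e ∈ S | G.fst e = v}.card + {e ∈ S | G.snd e = v}.card := by
  unfold deg
  rw [← ncard_coe_finset {e ∈ S | G.fst e = v}, ← ncard_coe_finset {e ∈ S | G.snd e = v},
    Finset.coe_filter, Finset.coe_filter]
  rfl

lemma isCycle_coe_of_isChain [DecidableEq V] {S : Finset E} (e : E) (l : List E)
    (hl : (e :: l).IsChain (G.EdgeAdj ↑S)) (hS : ∀ f ∈ S, f ∈ e :: l) (he : e ∈ S)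
    (hdeg : ∀ v, {f ∈ S | G.fst f = v}.card + {f ∈ S | G.snd f = v}.card ∈ ({0, 2} : Finset ℕ)) :
    G.IsCycle ↑S := by
  refine ⟨S.finite_toSet, ⟨e, he⟩, connectedOn_of_isChain l hl hS, fun v hv => ?_⟩
  have h0 := mt (deg_eq_zero_iff S.finite_toSet).1 (not_not.2 hv)
  have h02 := hdeg v
  rw [← deg_coe_finset] at h02
  simp only [Finset.mem_insert, Finset.mem_singleton] at h02
  omega

end MultiGraph

namespace BiasedGraph

open MultiGraph

variable {V : Type u} {E : Type v} {Ω : BiasedGraph V E} {P X : Set E} {c₁ c₂ : E}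

lemma frameCircuit_iff_isCycle (h : Ω.Balanced = {C | Ω.toMultiGraph.IsCycle C}) :
    Ω.FrameCircuit X ↔ Ω.toMultiGraph.IsCycle X := by
  refine ⟨fun hX => ?_, fun hX => .inl ⟨hX, h ▸ hX⟩⟩
  rcases hX with ⟨hX, -⟩ | ⟨C, -, -, ⟨hC, hCb⟩, -⟩ | ⟨C, -, ⟨hC, hCb⟩, -⟩ | ⟨C, -, -, ⟨hC, hCb⟩, -⟩
  · exact hX
  all_goals exact absurd (h ▸ hC) hCb

lemma frameCircuit_of_isPathBetween (h₁ : Ω.toMultiGraph.IsLoopEdge c₁) (hb₁ : {c₁} ∉ Ω.Balanced)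
    (h₂ : Ω.toMultiGraph.IsLoopEdge c₂) (hb₂ : {c₂} ∉ Ω.Balanced)
    (hP : Ω.toMultiGraph.IsPathBetween P (Ω.fst c₁) (Ω.fst c₂)) :
    Ω.FrameCircuit ({c₁} ∪ {c₂} ∪ P) := by
  have hv₁ := vset_singleton_of_joins h₁.joins
  have hv₂ := vset_singleton_of_joins h₂.joins
  rw [pair_eq_singleton] at hv₁ hv₂
  have hends : ∀ v ∈ ({Ω.fst c₁, Ω.fst c₂} : Set V), v ∈ Ω.toMultiGraph.VSet P := fun v hv =>
    (hP.2 ▸ hv : v ∈ Ω.toMultiGraph.Ends P).1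
  refine .inr <| .inr <| .inr ⟨{c₁}, {c₂}, P, ⟨isCycle_singleton_of_isLoopEdge h₁, hb₁⟩,
    ⟨isCycle_singleton_of_isLoopEdge h₂, hb₂⟩, ?_, hP.1, ?_,
    ⟨_, _, hP.ne, hP.2, ?_, ?_⟩, rfl⟩
  · rw [hv₁, hv₂, disjoint_singleton]
    exact hP.ne
  · rw [disjoint_union_right, disjoint_singleton_right, disjoint_singleton_right]
    exact ⟨fun h => hP.1.not_isLoopEdge h h₁, fun h => hP.1.not_isLoopEdge h h₂⟩
  · rw [hv₁, inter_singleton_of_mem (hends _ (mem_insert _ _))]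
  · rw [hv₂, inter_singleton_of_mem (hends _ (mem_insert_of_mem _ rfl))]

lemma IsTightHandcuff.eq_empty_of_isLoopEdge (hH : Ω.IsTightHandcuff ({c₁} ∪ {c₂} ∪ P))
    (hne : c₁ ≠ c₂) (h₁ : Ω.toMultiGraph.IsLoopEdge c₁) (h₂ : Ω.toMultiGraph.IsLoopEdge c₂)
    (hc₁ : c₁ ∉ P) (hc₂ : c₂ ∉ P) : P = ∅ := by
  obtain ⟨C₁, C₂, hC₁, hC₂, -, -, hH⟩ := hH
  have hCL := union_eq_of_isLoopEdge hC₁.1 hC₂.1 hne h₁ h₂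
    (hH ▸ .inl (.inl rfl)) (hH ▸ .inl (.inr rfl))
  rw [← hCL, union_eq_left] at hH
  exact subset_empty_iff.1 fun p hp => by grind

lemma IsLooseHandcuff.isPathBetween_of_isLoopEdge (hH : Ω.IsLooseHandcuff ({c₁} ∪ {c₂} ∪ P))
    (hne : c₁ ≠ c₂) (h₁ : Ω.toMultiGraph.IsLoopEdge c₁) (h₂ : Ω.toMultiGraph.IsLoopEdge c₂)
    (hc₁ : c₁ ∉ P) (hc₂ : c₂ ∉ P) :
    Ω.toMultiGraph.IsPathBetween P (Ω.fst c₁) (Ω.fst c₂) := by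
  obtain ⟨C₁, C₂, Q, hC₁, hC₂, -, hQ, -, ⟨a, b, hab, hends, ha, hb⟩, hH⟩ := hH
  have hQ₁ : c₁ ∉ Q := (hQ.not_isLoopEdge · h₁)
  have hQ₂ : c₂ ∉ Q := (hQ.not_isLoopEdge · h₂)
  have hCL := union_eq_of_isLoopEdge hC₁.1 hC₂.1 hne h₁ h₂
    ((hH ▸ .inl (.inl rfl) : c₁ ∈ C₁ ∪ C₂ ∪ Q).resolve_right hQ₁)
    ((hH ▸ .inl (.inr rfl) : c₂ ∈ C₁ ∪ C₂ ∪ Q).resolve_right hQ₂)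
  obtain rfl : P = Q := by
    rw [hCL] at hH
    ext p
    have := congrArg (p ∈ ·) hH
    grind
  have hV : Ω.toMultiGraph.VSet (C₁ ∪ C₂) = {Ω.fst c₁, Ω.fst c₂} := by
    rw [hCL, vset_union, vset_singleton_of_joins h₁.joins, vset_singleton_of_joins h₂.joins,
      pair_eq_singleton, pair_eq_singleton, singleton_union]
  have ha' : a ∈ Ω.toMultiGraph.VSet (C₁ ∪ C₂) := vset_union ▸ .inl (ha.symm.subset rfl).2
  have hb' : b ∈ Ω.toMultiGraph.VSet (C₁ ∪ C₂) := vset_union ▸ .inr (hb.symm.subset rfl).2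
  rw [hV, mem_insert_iff, mem_singleton_iff] at ha' hb'
  refine ⟨hQ, hends.trans ?_⟩
  rw [pair_eq_pair_iff]
  grind

lemma FrameCircuit.isPathBetween_of_isLoopEdge (hX : Ω.FrameCircuit ({c₁} ∪ {c₂} ∪ P))
    (hne : c₁ ≠ c₂) (h₁ : Ω.toMultiGraph.IsLoopEdge c₁) (h₂ : Ω.toMultiGraph.IsLoopEdge c₂)
    (hc₁ : c₁ ∉ P) (hc₂ : c₂ ∉ P) (hP : P.Nonempty) :
    Ω.toMultiGraph.IsPathBetween P (Ω.fst c₁) (Ω.fst c₂) := by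
  have hc₁X : c₁ ∈ {c₁} ∪ {c₂} ∪ P := .inl (.inl rfl)
  rcases hX with ⟨hC, -⟩ | ⟨C₁, C₂, C₃, hC₁, hC₂, hC₃, hΔ, hT⟩ | hH | hH
  · have hc₂ : c₂ ∈ ({c₁} : Set E) := hC.eq_singleton_of_isLoopEdge hc₁X h₁ ▸ .inl (.inr rfl)
    exact absurd hc₂ hne.symm
  · exact absurd h₁ (not_isLoopEdge_of_mem_theta hC₁.1 hC₂.1 (hΔ ▸ hC₃.1) (hT ▸ hc₁X))
  · exact absurd (hH.eq_empty_of_isLoopEdge hne h₁ h₂ hc₁ hc₂) hP.ne_empty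
  · exact hH.isPathBetween_of_isLoopEdge hne h₁ h₂ hc₁ hc₂

end BiasedGraph

namespace W4

open MultiGraph

lemma isCycle_rim : W4.IsCycle ({0} ∪ {2} ∪ {1, 3}) := by
  rw [show ({0} ∪ {2} ∪ {1, 3} : Set (Fin 8)) = ↑({0, 1, 2, 3} : Finset (Fin 8)) by
    ext; simp; omega]
  exact isCycle_coe_of_isChain 0 [1, 2, 3] (by decide) (by decide) (by decide) (by decide)

lemma isCycle_detour_three : W4.IsCycle ({0} ∪ {2} ∪ {1, 4, 7}) := by
  rw [show ({0} ∪ {2} ∪ {1, 4, 7} : Set (Fin 8)) = ↑({0, 1, 2, 4, 7} : Finset (Fin 8)) by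
    ext; simp; omega]
  exact isCycle_coe_of_isChain 0 [1, 2, 7, 4] (by decide) (by decide) (by decide) (by decide)

lemma isCycle_detour_one : W4.IsCycle ({0} ∪ {2} ∪ {3, 5, 6}) := by
  rw [show ({0} ∪ {2} ∪ {3, 5, 6} : Set (Fin 8)) = ↑({0, 2, 3, 5, 6} : Finset (Fin 8)) by
    ext; simp; omega]
  exact isCycle_coe_of_isChain 0 [5, 6, 2, 3] (by decide) (by decide) (by decide) (by decide)

lemma not_isCycle_of_subset_spokes {P : Set (Fin 8)} (hP : P ⊆ {4, 5, 6, 7}) :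
    ¬ W4.IsCycle ({0} ∪ {2} ∪ P) := by
  intro hC
  obtain ⟨Q, rfl⟩ := (toFinite P).exists_finset_coe
  have hQ : Q ∈ ({4, 5, 6, 7} : Finset (Fin 8)).powerset := by
    rw [Finset.mem_powerset, ← Finset.coe_subset]
    simpa using hP
  -- a rim vertex whose spoke is missing has degree 1; with all spokes the hub has degree 4
  have hbad : ∀ Q ∈ ({4, 5, 6, 7} : Finset (Fin 8)).powerset, ∃ v,
      {e ∈ {0, 2} ∪ Q | W4.fst e = v}.card + {e ∈ {0, 2} ∪ Q | W4.snd e = v}.card ∉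
        ({0, 2} : Finset ℕ) := by
    set_option maxRecDepth 4000 in decide
  obtain ⟨v, hv⟩ := hbad Q hQ
  rw [show ({0} ∪ {2} ∪ ↑Q : Set (Fin 8)) = ↑(({0, 2} : Finset (Fin 8)) ∪ Q) by
    push_cast; rfl] at hC
  have := hC.deg_eq_zero_or_two v
  rw [deg_coe_finset] at this
  simp only [Finset.mem_insert, Finset.mem_singleton] at hv
  omega

end W4

theorem stmt_16_general {V : Type u} (Ω : BiasedGraph V (Fin 8))
    (hrep : ∀ X : Set (Fin 8), Ω.FrameCircuit X ↔ W4Biased.FrameCircuit X)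
    (h1 : Ω.toMultiGraph.IsLoopEdge 0 ∧ {(0 : Fin 8)} ∉ Ω.Balanced)
    (h2 : Ω.toMultiGraph.IsLoopEdge 2 ∧ {(2 : Fin 8)} ∉ Ω.Balanced) : False := by
  have hW4 (X : Set (Fin 8)) : W4Biased.FrameCircuit X ↔ W4.IsCycle X :=
    BiasedGraph.frameCircuit_iff_isCycle rfl
  have path_of_cycle (P : Set (Fin 8)) (hC : W4.IsCycle ({0} ∪ {2} ∪ P)) (h₀ : 0 ∉ P)
      (h₂ : 2 ∉ P) (hne : P.Nonempty) : Ω.toMultiGraph.IsPathBetween P (Ω.fst 0) (Ω.fst 2) :=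
    ((hrep _).2 ((hW4 _).2 hC)).isPathBetween_of_isLoopEdge (by decide) h1.1 h2.1 h₀ h₂ hne
  obtain ⟨P, hPs, hP⟩ := MultiGraph.exists_isPathBetween_of_three_paths
    (by decide) (by decide) (by decide) (by decide) (by decide) (by decide) (by decide)
    (path_of_cycle _ W4.isCycle_rim (by simp) (by simp) (by simp))
    (path_of_cycle _ W4.isCycle_detour_three (by simp) (by simp) (by simp))
    (path_of_cycle _ W4.isCycle_detour_one (by simp) (by simp) (by simp))
  have hPs' : P ⊆ {4, 5, 6, 7} := hPs.trans (by simp [insert_subset_iff])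
  exact W4.not_isCycle_of_subset_spokes hPs' ((hW4 _).1 ((hrep _).1
    (BiasedGraph.frameCircuit_of_isPathBetween h1.1 h1.2 h2.1 h2.2 hP)))

theorem stmt_16 {V : Type u} (Ω : BiasedGraph V (Fin 8))
    (hθ : Ω.ThetaProperty)
    (hrep : ∀ X : Set (Fin 8), Ω.FrameCircuit X ↔ W4Biased.FrameCircuit X)
    (h1 : Ω.toMultiGraph.IsLoopEdge 0 ∧ {(0 : Fin 8)} ∉ Ω.Balanced)
    (h2 : Ω.toMultiGraph.IsLoopEdge 2 ∧ {(2 : Fin 8)} ∉ Ω.Balanced) : False :=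
  stmt_16_general Ω hrep h1 h2
end
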